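/- On ℓ²(ℤ^d), with c_d := max(d³ + d² + 1, 4(d+1)), one has A² + 1 ≤ c_d (N² + 1) in the sense of quadratic forms on Dom[N²], where A is the generator of dilations and N² := ∑_{i=1}^d N_i². -/
import Mathlib


/-! Operators on sequences over `ℤ^d` (pointwise definitions). -/

/-- Right shift in the `i`-th coordinate. -/
noncomputable def shiftR {d : ℕ} (i : Fin d) (ψ : (Fin d → ℤ) → ℂ) : (Fin d → ℤ) → ℂ :=
  fun n => ψ (Function.update n i (n i - 1))

/-- Left shift in the `i`-th coordinate. -/
noncomputable def shiftL {d : ℕ} (i : Fin d) (ψ : (Fin d → ℤ) → ℂ) : (Fin d → ℤ) → ℂ :=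
  fun n => ψ (Function.update n i (n i + 1))

/-- Position operator `(N_i ψ)(n) = n_i ψ(n)`. -/
noncomputable def posOp {d : ℕ} (i : Fin d) (ψ : (Fin d → ℤ) → ℂ) : (Fin d → ℤ) → ℂ :=
  fun n => (n i : ℂ) * ψ n

/-- Generator of dilations `A₀ = (i/2) ∑ (S_i - S_i*) N_i + N_i (S_i - S_i*)`. -/
noncomputable def dilA {d : ℕ} (ψ : (Fin d → ℤ) → ℂ) : (Fin d → ℤ) → ℂ :=
  fun n => (Complex.I / 2) *
    ∑ i : Fin d,
      (shiftR i (posOp i ψ) n - shiftL i (posOp i ψ) n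
        + posOp i (shiftR i ψ) n - posOp i (shiftL i ψ) n)

/-- translation by +1 in coordinate i -/
def transl {d : ℕ} (i : Fin d) : (Fin d → ℤ) ≃ (Fin d → ℤ) where
  toFun n := Function.update n i (n i + 1)
  invFun n := Function.update n i (n i - 1)
  left_inv n := by
    ext j; by_cases h : j = i <;> simp [Function.update, h]
  right_inv n := by
    ext j; by_cases h : j = i <;> simp [Function.update, h]

lemma dilA_apply {d : ℕ} (ψ : (Fin d → ℤ) → ℂ) (n : Fin d → ℤ) :
    dilA ψ n = (Complex.I / 2) *
      ∑ i : Fin d,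
        (((2 * n i - 1 : ℤ) : ℂ) * ψ (Function.update n i (n i - 1))
          - ((2 * n i + 1 : ℤ) : ℂ) * ψ (Function.update n i (n i + 1))) := by
  unfold dilA shiftR shiftL posOp
  congr 1
  apply Finset.sum_congr rfl
  intro i _
  simp only [Function.update_self]
  push_cast
  ring

lemma transl_comp_right {d : ℕ} (ψ : (Fin d → ℤ) → ℂ) (i : Fin d) (m : Fin d → ℤ) :
    (2 * (((transl i m) i : ℤ) : ℝ) - 1) ^ 2
        * ‖ψ (Function.update (transl i m) i ((transl i m) i - 1))‖ ^ 2
      = (2 * ((m i : ℤ) : ℝ) + 1) ^ 2 * ‖ψ m‖ ^ 2 := by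
  have h1 : (transl i m) i = m i + 1 := by simp [transl]
  have h2 : Function.update (transl i m) i (m i + 1 - 1) = m := by
    simp [transl, Function.update_idem]
  rw [h1, h2]; push_cast; ring_nf

lemma transl_comp_left {d : ℕ} (ψ : (Fin d → ℤ) → ℂ) (i : Fin d) (m : Fin d → ℤ) :
    (2 * ((((transl i).symm m) i : ℤ) : ℝ) + 1) ^ 2
        * ‖ψ (Function.update ((transl i).symm m) i (((transl i).symm m) i + 1))‖ ^ 2
      = (2 * ((m i : ℤ) : ℝ) - 1) ^ 2 * ‖ψ m‖ ^ 2 := by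
  have h1 : ((transl i).symm m) i = m i - 1 := by simp [transl]
  have h2 : Function.update ((transl i).symm m) i (m i - 1 + 1) = m := by
    simp [transl, Function.update_idem]
  rw [h1, h2]; push_cast; ring_nf

/-- With `c_d = max(d³ + d² + 1, 4(d+1))`, one has `A² + 1 ≤ c_d (N² + 1)` as quadratic forms
on `Dom[N²]`: for every `ψ` with `(1 + |n|²)² |ψ(n)|²` summable (i.e. `ψ ∈ Dom[N²] ⊂ Dom[A²]`),
`⟨ψ, (A²+1)ψ⟩ = ‖ψ‖² + ‖Aψ‖² ≤ c_d (‖ψ‖² + ∑_i ‖N_i ψ‖²) = c_d ⟨ψ, (N²+1)ψ⟩`. -/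
theorem stmt3 (d : ℕ) (ψ : (Fin d → ℤ) → ℂ)
    (hψ : Summable (fun n : Fin d → ℤ =>
      (1 + ∑ i : Fin d, ((n i : ℝ)) ^ 2) ^ 2 * ‖ψ n‖ ^ 2)) :
    (∑' n : Fin d → ℤ, ‖ψ n‖ ^ 2) + ∑' n : Fin d → ℤ, ‖dilA ψ n‖ ^ 2
      ≤ (max ((d : ℝ) ^ 3 + (d : ℝ) ^ 2 + 1) (4 * ((d : ℝ) + 1))) *
        ((∑' n : Fin d → ℤ, ‖ψ n‖ ^ 2)
          + ∑' n : Fin d → ℤ, (∑ i : Fin d, ((n i : ℝ)) ^ 2) * ‖ψ n‖ ^ 2) := by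
  classical
  set c : ℝ := max ((d : ℝ) ^ 3 + (d : ℝ) ^ 2 + 1) (4 * ((d : ℝ) + 1)) with hcdef
  have hq0 : ∀ n : Fin d → ℤ, (0:ℝ) ≤ ‖ψ n‖ ^ 2 := fun n => sq_nonneg _
  have hN0 : ∀ n : Fin d → ℤ, (0:ℝ) ≤ ∑ i : Fin d, ((n i : ℝ)) ^ 2 :=
    fun n => Finset.sum_nonneg fun _ _ => sq_nonneg _
  have hNi : ∀ (i : Fin d) (n : Fin d → ℤ), ((n i : ℝ)) ^ 2 ≤ ∑ j : Fin d, ((n j : ℝ)) ^ 2 :=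
    fun i n => Finset.single_le_sum (f := fun j => ((n j : ℝ)) ^ 2)
      (fun _ _ => sq_nonneg _) (Finset.mem_univ i)
  -- domination principle
  have hdom : ∀ (f : (Fin d → ℤ) → ℝ) (C : ℝ), (∀ n, 0 ≤ f n) →
      (∀ n, f n ≤ C * ((1 + ∑ i : Fin d, ((n i : ℝ)) ^ 2) ^ 2 * ‖ψ n‖ ^ 2)) → Summable f :=
    fun f C h0 hle => Summable.of_nonneg_of_le h0 hle (hψ.mul_left C)
  have Sq : Summable (fun n : Fin d → ℤ => ‖ψ n‖ ^ 2) :=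
    hdom _ 1 hq0 (fun n => by nlinarith [hq0 n, hN0 n, sq_nonneg (∑ i : Fin d, ((n i : ℝ)) ^ 2)])
  have SNq : Summable (fun n : Fin d → ℤ => (∑ i : Fin d, ((n i : ℝ)) ^ 2) * ‖ψ n‖ ^ 2) :=
    hdom _ 1 (fun n => mul_nonneg (hN0 n) (hq0 n))
      (fun n => by
        have h : (∑ i : Fin d, ((n i : ℝ)) ^ 2) ≤ (1 + ∑ i : Fin d, ((n i : ℝ)) ^ 2) ^ 2 := by
          nlinarith [hN0 n]
        calc (∑ i : Fin d, ((n i : ℝ)) ^ 2) * ‖ψ n‖ ^ 2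
            ≤ (1 + ∑ i : Fin d, ((n i : ℝ)) ^ 2) ^ 2 * ‖ψ n‖ ^ 2 :=
              mul_le_mul_of_nonneg_right h (hq0 n)
          _ = 1 * ((1 + ∑ i : Fin d, ((n i : ℝ)) ^ 2) ^ 2 * ‖ψ n‖ ^ 2) := (one_mul _).symm)
  -- the four families of weighted functions
  set a : Fin d → (Fin d → ℤ) → ℝ := fun i n =>
    (2 * ((n i : ℝ)) - 1) ^ 2 * ‖ψ (Function.update n i (n i - 1))‖ ^ 2 with hadef
  set b : Fin d → (Fin d → ℤ) → ℝ := fun i n =>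
    (2 * ((n i : ℝ)) + 1) ^ 2 * ‖ψ (Function.update n i (n i + 1))‖ ^ 2 with hbdef
  set p : Fin d → (Fin d → ℤ) → ℝ := fun i n => (2 * ((n i : ℝ)) + 1) ^ 2 * ‖ψ n‖ ^ 2 with hpdef
  set m : Fin d → (Fin d → ℤ) → ℝ := fun i n => (2 * ((n i : ℝ)) - 1) ^ 2 * ‖ψ n‖ ^ 2 with hmdef
  have Sp : ∀ i, Summable (p i) := by
    intro i
    refine hdom _ 8 (fun n => mul_nonneg (sq_nonneg _) (hq0 n)) (fun n => ?_)
    have hx : (2 * ((n i : ℝ)) + 1) ^ 2 ≤ 8 * (1 + ∑ j : Fin d, ((n j : ℝ)) ^ 2) ^ 2 := by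
      nlinarith [hNi i n, hN0 n, sq_nonneg ((n i : ℝ) - 1), sq_nonneg ((n i : ℝ) + 1),
        sq_nonneg (∑ j : Fin d, ((n j : ℝ)) ^ 2)]
    calc p i n ≤ (8 * (1 + ∑ j : Fin d, ((n j : ℝ)) ^ 2) ^ 2) * ‖ψ n‖ ^ 2 :=
          mul_le_mul_of_nonneg_right hx (hq0 n)
      _ = 8 * ((1 + ∑ j : Fin d, ((n j : ℝ)) ^ 2) ^ 2 * ‖ψ n‖ ^ 2) := by ring
  have Sm : ∀ i, Summable (m i) := by
    intro i
    refine hdom _ 8 (fun n => mul_nonneg (sq_nonneg _) (hq0 n)) (fun n => ?_)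
    have hx : (2 * ((n i : ℝ)) - 1) ^ 2 ≤ 8 * (1 + ∑ j : Fin d, ((n j : ℝ)) ^ 2) ^ 2 := by
      nlinarith [hNi i n, hN0 n, sq_nonneg ((n i : ℝ) - 1), sq_nonneg ((n i : ℝ) + 1),
        sq_nonneg (∑ j : Fin d, ((n j : ℝ)) ^ 2)]
    calc m i n ≤ (8 * (1 + ∑ j : Fin d, ((n j : ℝ)) ^ 2) ^ 2) * ‖ψ n‖ ^ 2 :=
          mul_le_mul_of_nonneg_right hx (hq0 n)
      _ = 8 * ((1 + ∑ j : Fin d, ((n j : ℝ)) ^ 2) ^ 2 * ‖ψ n‖ ^ 2) := by ring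
  have hacomp : ∀ i : Fin d, (a i) ∘ (transl i) = p i := by
    intro i; funext n; exact transl_comp_right ψ i n
  have hbcomp : ∀ i : Fin d, (b i) ∘ (transl i).symm = m i := by
    intro i; funext n; exact transl_comp_left ψ i n
  have Sa : ∀ i, Summable (a i) := by
    intro i
    have : Summable ((a i) ∘ (transl i)) := by rw [hacomp i]; exact Sp i
    exact ((transl i).summable_iff).mp this
  have Sb : ∀ i, Summable (b i) := by
    intro i
    have : Summable ((b i) ∘ (transl i).symm) := by rw [hbcomp i]; exact Sm i
    exact (((transl i).symm).summable_iff).mp this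
  have Ta : ∀ i, ∑' n, a i n = ∑' n, p i n := by
    intro i
    rw [← (transl i).tsum_eq (a i)]
    exact tsum_congr fun n => (transl_comp_right ψ i n)
  have Tb : ∀ i, ∑' n, b i n = ∑' n, m i n := by
    intro i
    rw [← ((transl i).symm).tsum_eq (b i)]
    exact tsum_congr fun n => (transl_comp_left ψ i n)
  -- pointwise bound
  have pt : ∀ n, ‖dilA ψ n‖ ^ 2 ≤ (d : ℝ) / 2 * ∑ i : Fin d, (a i n + b i n) := by
    intro n
    rw [dilA_apply]
    rw [norm_mul]
    have hI : ‖Complex.I / 2‖ = 1 / 2 := by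
      rw [norm_div, Complex.norm_I]; norm_num
    rw [hI]
    have h1 : ‖∑ i : Fin d,
        (((2 * n i - 1 : ℤ) : ℂ) * ψ (Function.update n i (n i - 1))
          - ((2 * n i + 1 : ℤ) : ℂ) * ψ (Function.update n i (n i + 1)))‖
        ≤ ∑ i : Fin d, (|2 * ((n i : ℝ)) - 1| * ‖ψ (Function.update n i (n i - 1))‖
            + |2 * ((n i : ℝ)) + 1| * ‖ψ (Function.update n i (n i + 1))‖) := by
      refine (norm_sum_le _ _).trans (Finset.sum_le_sum fun i _ => ?_)
      refine (norm_sub_le _ _).trans ?_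
      rw [norm_mul, norm_mul]
      have e1 : ‖((2 * n i - 1 : ℤ) : ℂ)‖ = |2 * ((n i : ℝ)) - 1| := by
        rw [show ((2 * n i - 1 : ℤ) : ℂ) = ((2 * ((n i : ℝ)) - 1 : ℝ) : ℂ) by push_cast; ring]
        rw [Complex.norm_real, Real.norm_eq_abs]
      have e2 : ‖((2 * n i + 1 : ℤ) : ℂ)‖ = |2 * ((n i : ℝ)) + 1| := by
        rw [show ((2 * n i + 1 : ℤ) : ℂ) = ((2 * ((n i : ℝ)) + 1 : ℝ) : ℂ) by push_cast; ring]
        rw [Complex.norm_real, Real.norm_eq_abs]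
      rw [e1, e2]
    have h2 : (∑ i : Fin d, (|2 * ((n i : ℝ)) - 1| * ‖ψ (Function.update n i (n i - 1))‖
            + |2 * ((n i : ℝ)) + 1| * ‖ψ (Function.update n i (n i + 1))‖)) ^ 2
        ≤ (d : ℝ) * ∑ i : Fin d, (|2 * ((n i : ℝ)) - 1| * ‖ψ (Function.update n i (n i - 1))‖
            + |2 * ((n i : ℝ)) + 1| * ‖ψ (Function.update n i (n i + 1))‖) ^ 2 := by
      have := sq_sum_le_card_mul_sum_sq (s := (Finset.univ : Finset (Fin d)))
        (f := fun i => |2 * ((n i : ℝ)) - 1| * ‖ψ (Function.update n i (n i - 1))‖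
            + |2 * ((n i : ℝ)) + 1| * ‖ψ (Function.update n i (n i + 1))‖)
      simpa using this
    have h3 : ∀ i : Fin d, (|2 * ((n i : ℝ)) - 1| * ‖ψ (Function.update n i (n i - 1))‖
            + |2 * ((n i : ℝ)) + 1| * ‖ψ (Function.update n i (n i + 1))‖) ^ 2
        ≤ 2 * (a i n + b i n) := by
      intro i
      have ha : a i n = (2 * ((n i : ℝ)) - 1) ^ 2 * ‖ψ (Function.update n i (n i - 1))‖ ^ 2 := rfl
      have hb : b i n = (2 * ((n i : ℝ)) + 1) ^ 2 * ‖ψ (Function.update n i (n i + 1))‖ ^ 2 := rfl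
      rw [ha, hb]
      have e1 : |2 * ((n i : ℝ)) - 1| ^ 2 = (2 * ((n i : ℝ)) - 1) ^ 2 := sq_abs _
      nlinarith [sq_nonneg (|2 * ((n i : ℝ)) - 1| * ‖ψ (Function.update n i (n i - 1))‖
        - |2 * ((n i : ℝ)) + 1| * ‖ψ (Function.update n i (n i + 1))‖), sq_abs (2 * ((n i : ℝ)) - 1),
        sq_abs (2 * ((n i : ℝ)) + 1)]
    calc (1 / 2 * ‖∑ i : Fin d,
        (((2 * n i - 1 : ℤ) : ℂ) * ψ (Function.update n i (n i - 1))
          - ((2 * n i + 1 : ℤ) : ℂ) * ψ (Function.update n i (n i + 1)))‖) ^ 2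
        ≤ (1 / 2) ^ 2 * ((∑ i : Fin d, (|2 * ((n i : ℝ)) - 1| * ‖ψ (Function.update n i (n i - 1))‖
            + |2 * ((n i : ℝ)) + 1| * ‖ψ (Function.update n i (n i + 1))‖)) ^ 2) := by
          rw [mul_pow]
          exact mul_le_mul_of_nonneg_left
            (pow_le_pow_left₀ (norm_nonneg _) h1 2) (by norm_num)
      _ ≤ (1 / 2) ^ 2 * ((d : ℝ) * ∑ i : Fin d, (|2 * ((n i : ℝ)) - 1| * ‖ψ (Function.update n i (n i - 1))‖
            + |2 * ((n i : ℝ)) + 1| * ‖ψ (Function.update n i (n i + 1))‖) ^ 2) := by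
          exact mul_le_mul_of_nonneg_left h2 (by norm_num)
      _ ≤ (1 / 2) ^ 2 * ((d : ℝ) * ∑ i : Fin d, 2 * (a i n + b i n)) := by
          refine mul_le_mul_of_nonneg_left (mul_le_mul_of_nonneg_left
            (Finset.sum_le_sum fun i _ => h3 i) (by positivity)) (by norm_num)
      _ = (d : ℝ) / 2 * ∑ i : Fin d, (a i n + b i n) := by
          rw [← Finset.mul_sum]; ring
  -- summability of the dominating function and of `‖dilA ψ‖²`
  have SF0 : Summable (fun n => ∑ i : Fin d, (a i n + b i n)) :=
    summable_sum (fun i _ => (Sa i).add (Sb i))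
  have SF : Summable (fun n => (d : ℝ) / 2 * ∑ i : Fin d, (a i n + b i n)) := SF0.mul_left _
  have SdilA : Summable (fun n : Fin d → ℤ => ‖dilA ψ n‖ ^ 2) :=
    SF.of_nonneg_of_le (fun n => sq_nonneg _) pt
  have Sr : ∀ i : Fin d, Summable (fun n : Fin d → ℤ => (8 * ((n i : ℝ)) ^ 2 + 2) * ‖ψ n‖ ^ 2) := by
    intro i
    have h := (Sp i).add (Sm i)
    have he : (fun n => p i n + m i n)
        = fun n : Fin d → ℤ => (8 * ((n i : ℝ)) ^ 2 + 2) * ‖ψ n‖ ^ 2 := by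
      funext n
      show (2 * ((n i : ℝ)) + 1) ^ 2 * ‖ψ n‖ ^ 2 + (2 * ((n i : ℝ)) - 1) ^ 2 * ‖ψ n‖ ^ 2 = _
      ring
    rwa [he] at h
  have key1 : ∀ i : Fin d, (∑' n, p i n) + (∑' n, m i n)
      = (∑' n : Fin d → ℤ, (8 * ((n i : ℝ)) ^ 2 + 2) * ‖ψ n‖ ^ 2) := by
    intro i
    rw [← Summable.tsum_add (Sp i) (Sm i)]
    refine tsum_congr fun n => ?_
    show (2 * ((n i : ℝ)) + 1) ^ 2 * ‖ψ n‖ ^ 2 + (2 * ((n i : ℝ)) - 1) ^ 2 * ‖ψ n‖ ^ 2 = _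
    ring
  have key2 : ∑ i : Fin d, ∑' n : Fin d → ℤ, (8 * ((n i : ℝ)) ^ 2 + 2) * ‖ψ n‖ ^ 2
      = ∑' n : Fin d → ℤ,
          (8 * (∑ i : Fin d, ((n i : ℝ)) ^ 2) + 2 * (d : ℝ)) * ‖ψ n‖ ^ 2 := by
    rw [← Summable.tsum_finsetSum (fun i _ => Sr i)]
    refine tsum_congr fun n => ?_
    rw [← Finset.sum_mul]
    congr 1
    rw [Finset.sum_add_distrib, ← Finset.mul_sum]
    simp [Finset.sum_const, Finset.card_univ, nsmul_eq_mul]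
    ring
  have T1 : ∑' n : Fin d → ℤ, ‖dilA ψ n‖ ^ 2
      ≤ (d : ℝ) / 2 * ∑' n : Fin d → ℤ,
          (8 * (∑ i : Fin d, ((n i : ℝ)) ^ 2) + 2 * (d : ℝ)) * ‖ψ n‖ ^ 2 := by
    calc ∑' n : Fin d → ℤ, ‖dilA ψ n‖ ^ 2
        ≤ ∑' n : Fin d → ℤ, ((d : ℝ) / 2 * ∑ i : Fin d, (a i n + b i n)) :=
          Summable.tsum_le_tsum pt SdilA SF
      _ = (d : ℝ) / 2 * ∑' n : Fin d → ℤ, ∑ i : Fin d, (a i n + b i n) := tsum_mul_left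
      _ = (d : ℝ) / 2 * ∑ i : Fin d, ∑' n : Fin d → ℤ, (a i n + b i n) := by
          rw [Summable.tsum_finsetSum (fun i _ => (Sa i).add (Sb i))]
      _ = (d : ℝ) / 2 * ∑ i : Fin d, ((∑' n, a i n) + (∑' n, b i n)) := by
          congr 1; exact Finset.sum_congr rfl fun i _ => Summable.tsum_add (Sa i) (Sb i)
      _ = (d : ℝ) / 2 * ∑ i : Fin d, ((∑' n, p i n) + (∑' n, m i n)) := by
          congr 1; exact Finset.sum_congr rfl fun i _ => by rw [Ta i, Tb i]
      _ = (d : ℝ) / 2 * ∑ i : Fin d, ∑' n : Fin d → ℤ, (8 * ((n i : ℝ)) ^ 2 + 2) * ‖ψ n‖ ^ 2 := by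
          congr 1; exact Finset.sum_congr rfl fun i _ => key1 i
      _ = _ := by rw [key2]
  have split : ∑' n : Fin d → ℤ,
        (8 * (∑ i : Fin d, ((n i : ℝ)) ^ 2) + 2 * (d : ℝ)) * ‖ψ n‖ ^ 2
      = 8 * (∑' n : Fin d → ℤ, (∑ i : Fin d, ((n i : ℝ)) ^ 2) * ‖ψ n‖ ^ 2)
        + 2 * (d : ℝ) * (∑' n : Fin d → ℤ, ‖ψ n‖ ^ 2) := by
    have he : (fun n : Fin d → ℤ =>
          (8 * (∑ i : Fin d, ((n i : ℝ)) ^ 2) + 2 * (d : ℝ)) * ‖ψ n‖ ^ 2)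
        = fun n : Fin d → ℤ => 8 * ((∑ i : Fin d, ((n i : ℝ)) ^ 2) * ‖ψ n‖ ^ 2)
            + 2 * (d : ℝ) * ‖ψ n‖ ^ 2 := by
      funext n; ring
    rw [he, Summable.tsum_add (SNq.mul_left 8) (Sq.mul_left (2 * (d : ℝ))), tsum_mul_left, tsum_mul_left]
  have hA0 : 0 ≤ ∑' n : Fin d → ℤ, ‖ψ n‖ ^ 2 := tsum_nonneg hq0
  have hB0 : 0 ≤ ∑' n : Fin d → ℤ, (∑ i : Fin d, ((n i : ℝ)) ^ 2) * ‖ψ n‖ ^ 2 :=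
    tsum_nonneg fun n => mul_nonneg (hN0 n) (hq0 n)
  have hd0 : (0:ℝ) ≤ (d : ℝ) := Nat.cast_nonneg d
  have hc1 : (d : ℝ) ^ 2 + 1 ≤ c :=
    le_trans (by nlinarith [pow_nonneg hd0 3]) (le_max_left _ _)
  have hc2 : 4 * (d : ℝ) ≤ c := le_trans (by linarith) (le_max_right _ _)
  rw [split] at T1
  nlinarith [T1, hA0, hB0, hd0, mul_nonneg (sub_nonneg.mpr hc1) hA0,
    mul_nonneg (sub_nonneg.mpr hc2) hB0]
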